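/- arXiv:2411.01620 — 2 statements merged into one kernel-verified Lean document; each statement's English description precedes it below -/
import Mathlib

section
/- Let a, b, t be complex numbers with |a·t| < 1 and |b·t| < 1. Then the family ((k,l) ↦ a^k · b^l · t^{k+l}) indexed by (k,l) ∈ Λ is absolutely summable, and ∑_{(k,l)∈Λ} a^k b^l t^{k+l} = (1 + a·b·t²) / ((1 − a²t²)(1 − b²t²)). -/
/-!
Writing `x = a t` and `y = b t`, the summand is `x ^ k * y ^ l`. A pair in `Λ` is either
`(2m, 2n)` or `(2m + 1, 2n + 1)`, so the sum over `Λ` is `(1 + x y)` times the double geometric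
series `∑ (x²)^m (y²)^n = (1 - x²)⁻¹ (1 - y²)⁻¹`.
-/

/-- Λ : the set of pairs (k,l) of nonnegative integers with k+l even. -/
def Lam : Set (ℕ × ℕ) := {kl | Even (kl.1 + kl.2)}

namespace Lam

def evenPair (p : ℕ × ℕ) : ℕ × ℕ := (2 * p.1, 2 * p.2)

def oddPair (p : ℕ × ℕ) : ℕ × ℕ := (2 * p.1 + 1, 2 * p.2 + 1)

theorem evenPair_injective : Function.Injective evenPair := by
  intro p q h
  simp only [evenPair, Prod.ext_iff] at h ⊢
  omega

theorem oddPair_injective : Function.Injective oddPair := by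
  intro p q h
  simp only [oddPair, Prod.ext_iff] at h ⊢
  omega

theorem disjoint_range_evenPair_oddPair :
    Disjoint (Set.range evenPair) (Set.range oddPair) := by
  rw [Set.disjoint_left]
  rintro _ ⟨p, rfl⟩ ⟨q, hq⟩
  simp only [evenPair, oddPair, Prod.ext_iff] at hq
  omega

theorem eq_range_evenPair_union_range_oddPair :
    Lam = Set.range evenPair ∪ Set.range oddPair := by
  ext ⟨k, l⟩
  simp only [Lam, Set.mem_ofPred_eq, Set.mem_union, Set.mem_range, evenPair, oddPair,
    Prod.ext_iff, Prod.exists, Nat.even_iff]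
  constructor
  · intro h
    rcases Nat.mod_two_eq_zero_or_one k with hk | hk
    · exact Or.inl ⟨k / 2, l / 2, by omega, by omega⟩
    · exact Or.inr ⟨k / 2, l / 2, by omega, by omega⟩
  · rintro (⟨m, n, rfl, rfl⟩ | ⟨m, n, rfl, rfl⟩) <;> omega

theorem hasSum_of_hasSum_evenPair_oddPair {α : Type*} [AddCommMonoid α] [TopologicalSpace α]
    [ContinuousAdd α] {f : ℕ × ℕ → α} {A B : α}
    (hEven : HasSum (f ∘ evenPair) A) (hOdd : HasSum (f ∘ oddPair) B) :
    HasSum (fun kl : Lam => f kl) (A + B) := by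
  rw [← evenPair_injective.hasSum_range_iff] at hEven
  rw [← oddPair_injective.hasSum_range_iff] at hOdd
  rw [eq_range_evenPair_union_range_oddPair]
  exact hEven.add_disjoint disjoint_range_evenPair_oddPair hOdd

end Lam

section DoubleGeometric

variable {K : Type*} [NormedDivisionRing K] {x y : K}

theorem summable_norm_pow_mul_pow (hx : ‖x‖ < 1) (hy : ‖y‖ < 1) :
    Summable fun p : ℕ × ℕ => ‖x ^ p.1 * y ^ p.2‖ :=
  (summable_norm_geometric_of_norm_lt_one hx).mul_norm (summable_norm_geometric_of_norm_lt_one hy)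

theorem hasSum_pow_mul_pow [CompleteSpace K] (hx : ‖x‖ < 1) (hy : ‖y‖ < 1) :
    HasSum (fun p : ℕ × ℕ => x ^ p.1 * y ^ p.2) ((1 - x)⁻¹ * (1 - y)⁻¹) := by
  have hx' := summable_norm_geometric_of_norm_lt_one hx
  have hy' := summable_norm_geometric_of_norm_lt_one hy
  convert (summable_mul_of_summable_norm hx' hy').hasSum using 1
  rw [← tsum_mul_tsum_of_summable_norm hx' hy', tsum_geometric_of_norm_lt_one hx,
    tsum_geometric_of_norm_lt_one hy]

end DoubleGeometric

theorem Lam.hasSum_pow_mul_pow {K : Type*} [NormedField K] [CompleteSpace K] {x y : K}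
    (hx : ‖x‖ < 1) (hy : ‖y‖ < 1) :
    HasSum (fun kl : Lam => x ^ kl.val.1 * y ^ kl.val.2)
      ((1 + x * y) / ((1 - x ^ 2) * (1 - y ^ 2))) := by
  have hSquares := _root_.hasSum_pow_mul_pow (x := x ^ 2) (y := y ^ 2)
    (by simpa using pow_lt_one₀ (norm_nonneg x) hx two_ne_zero)
    (by simpa using pow_lt_one₀ (norm_nonneg y) hy two_ne_zero)
  let f : ℕ × ℕ → K := fun kl => x ^ kl.1 * y ^ kl.2
  have hEven : HasSum (f ∘ evenPair) ((1 - x ^ 2)⁻¹ * (1 - y ^ 2)⁻¹) := by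
    simpa only [f, Function.comp_def, evenPair, pow_mul] using hSquares
  have hOdd : HasSum (f ∘ oddPair) (x * y * ((1 - x ^ 2)⁻¹ * (1 - y ^ 2)⁻¹)) := by
    have hodd : f ∘ oddPair = fun p => x * y * ((x ^ 2) ^ p.1 * (y ^ 2) ^ p.2) := by
      funext p
      simp only [f, Function.comp_apply, oddPair, pow_succ, pow_mul]
      ring
    exact hodd ▸ hSquares.mul_left (x * y)
  convert hasSum_of_hasSum_evenPair_oddPair hEven hOdd using 1
  rw [div_eq_mul_inv, mul_inv]
  ring

/-- For complex numbers a, b, t with |a·t| < 1 and |b·t| < 1, the family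
((k,l) ↦ a^k · b^l · t^(k+l)) indexed by (k,l) ∈ Λ is absolutely summable, and
∑_{(k,l)∈Λ} a^k b^l t^(k+l) = (1 + a·b·t²)/((1 − a²t²)(1 − b²t²)). -/
theorem lambda_sum_rational (a b t : ℂ)
    (ha : ‖a * t‖ < 1) (hb : ‖b * t‖ < 1) :
    Summable (fun kl : Lam =>
      ‖a ^ kl.val.1 * b ^ kl.val.2 * t ^ (kl.val.1 + kl.val.2)‖) ∧
    ∑' kl : Lam, a ^ kl.val.1 * b ^ kl.val.2 * t ^ (kl.val.1 + kl.val.2)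
      = (1 + a * b * t ^ 2) / ((1 - a ^ 2 * t ^ 2) * (1 - b ^ 2 * t ^ 2)) := by
  have hsplit : ∀ k l : ℕ, a ^ k * b ^ l * t ^ (k + l) = (a * t) ^ k * (b * t) ^ l := by
    intro k l
    rw [mul_pow, mul_pow, pow_add]
    ring
  simp only [hsplit]
  refine ⟨(summable_norm_pow_mul_pow ha hb).subtype Lam, ?_⟩
  rw [(Lam.hasSum_pow_mul_pow ha hb).tsum_eq]
  ring
end

section
/- Let p be a prime, let χ₁, χ₂ : ℚ_p^× → ℂ^× be group homomorphisms that are trivial on ℤ_p^× (unramified characters of ℚ_p^×), and let s ∈ ℂ with |χ₁(p)| < p^{Re(s)} and |χ₂(p)| < p^{Re(s)}. Then the family ((k,l) ↦ χ₁(p^k)·χ₂(p^l)·p^{−s(k+l)}) indexed by (k,l) ∈ Λ is absolutely summable and ∑_{(k,l)∈Λ} χ₁(p^k)·χ₂(p^l)·p^{−s(k+l)} = (1 + χ₁(p)χ₂(p)p^{−2s}) / ((1 − χ₁(p²)p^{−2s})(1 − χ₂(p²)p^{−2s})). -/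
lemma indicator_lam_pow_mul_pow {K : Type*} [Field K] [CharZero K] (a b : K) (kl : ℕ × ℕ) :
    Lam.indicator (fun kl : ℕ × ℕ => a ^ kl.1 * b ^ kl.2) kl
      = (a ^ kl.1 * b ^ kl.2 + (-a) ^ kl.1 * (-b) ^ kl.2) / 2 := by
  have hsign : (-a) ^ kl.1 * (-b) ^ kl.2 = (-1) ^ (kl.1 + kl.2) * (a ^ kl.1 * b ^ kl.2) := by
    rw [neg_pow, neg_pow, pow_add]; ring
  rw [hsign]
  by_cases hkl : Even (kl.1 + kl.2)
  · rw [Set.indicator_of_mem (show kl ∈ Lam from hkl), hkl.neg_one_pow]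
    ring
  · rw [Set.indicator_of_notMem (show kl ∉ Lam from hkl),
      (Nat.not_even_iff_odd.mp hkl).neg_one_pow]
    ring

section DoubleGeometricSeries

variable {𝕜 : Type*} [NormedField 𝕜] {a b : 𝕜}

lemma summable_norm_pow_mul_pow_s1 (ha : ‖a‖ < 1) (hb : ‖b‖ < 1) :
    Summable fun kl : ℕ × ℕ => ‖a ^ kl.1 * b ^ kl.2‖ := by
  simp only [norm_mul, norm_pow]
  exact (summable_geometric_of_lt_one (norm_nonneg a) ha).mul_of_nonneg
    (summable_geometric_of_lt_one (norm_nonneg b) hb)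
    (fun _ => pow_nonneg (norm_nonneg a) _) (fun _ => pow_nonneg (norm_nonneg b) _)

variable [CompleteSpace 𝕜]

lemma tsum_pow_mul_pow (ha : ‖a‖ < 1) (hb : ‖b‖ < 1) :
    ∑' kl : ℕ × ℕ, a ^ kl.1 * b ^ kl.2 = (1 - a)⁻¹ * (1 - b)⁻¹ := by
  have norm_geom {x : 𝕜} (hx : ‖x‖ < 1) : Summable fun n : ℕ => ‖x ^ n‖ := by
    simpa only [norm_pow] using summable_geometric_of_lt_one (norm_nonneg x) hx
  rw [← tsum_mul_tsum_of_summable_norm (norm_geom ha) (norm_geom hb),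
    tsum_geometric_of_norm_lt_one ha, tsum_geometric_of_norm_lt_one hb]

variable [CharZero 𝕜]

lemma tsum_lam_pow_mul_pow (ha : ‖a‖ < 1) (hb : ‖b‖ < 1) :
    ∑' kl : Lam, a ^ kl.val.1 * b ^ kl.val.2 = (1 + a * b) / ((1 - a ^ 2) * (1 - b ^ 2)) := by
  have ha' : ‖-a‖ < 1 := by rwa [norm_neg]
  have hb' : ‖-b‖ < 1 := by rwa [norm_neg]
  have summable {x y : 𝕜} (hx : ‖x‖ < 1) (hy : ‖y‖ < 1) :
      Summable fun kl : ℕ × ℕ => x ^ kl.1 * y ^ kl.2 :=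
    (summable_norm_pow_mul_pow_s1 hx hy).of_norm
  have one_sub_ne_zero {x : 𝕜} (hx : ‖x‖ < 1) : 1 - x ≠ 0 := fun h => by
    simp [← sub_eq_zero.mp h] at hx
  have h1 := one_sub_ne_zero ha
  have h2 := one_sub_ne_zero ha'
  have h3 := one_sub_ne_zero hb
  have h4 := one_sub_ne_zero hb'
  calc ∑' kl : Lam, a ^ kl.val.1 * b ^ kl.val.2
      = ∑' kl : ℕ × ℕ, (a ^ kl.1 * b ^ kl.2 + (-a) ^ kl.1 * (-b) ^ kl.2) / 2 := by
        rw [tsum_subtype Lam fun kl : ℕ × ℕ => a ^ kl.1 * b ^ kl.2]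
        exact tsum_congr (indicator_lam_pow_mul_pow a b)
    _ = ((1 - a)⁻¹ * (1 - b)⁻¹ + (1 - -a)⁻¹ * (1 - -b)⁻¹) / 2 := by
        rw [tsum_div_const, (summable ha hb).tsum_add (summable ha' hb'),
          tsum_pow_mul_pow ha hb, tsum_pow_mul_pow ha' hb']
    _ = (1 + a * b) / ((1 - a ^ 2) * (1 - b ^ 2)) := by
        rw [show (1 : 𝕜) - a ^ 2 = (1 - a) * (1 - -a) by ring,
          show (1 : 𝕜) - b ^ 2 = (1 - b) * (1 - -b) by ring]
        field_simp
        ring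

end DoubleGeometricSeries

lemma norm_mul_natCast_cpow_neg_lt_one {n : ℕ} (hn : 0 < n) {x s : ℂ}
    (hx : ‖x‖ < (n : ℝ) ^ s.re) : ‖x * (n : ℂ) ^ (-s)‖ < 1 := by
  rw [norm_mul, Complex.norm_natCast_cpow_of_pos hn, Complex.neg_re, Real.rpow_neg (by positivity),
    ← div_eq_mul_inv]
  exact (div_lt_one (Real.rpow_pos_of_pos (by exact_mod_cast hn) _)).mpr hx

theorem unramified_character_hecke_series_general (p : ℕ) [Fact p.Prime]
    (χ₁ χ₂ : ℚ_[p]ˣ →* ℂˣ)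
    (pu : ℚ_[p]ˣ)
    (s : ℂ)
    (hs₁ : ‖((χ₁ pu : ℂˣ) : ℂ)‖ < (p : ℝ) ^ s.re)
    (hs₂ : ‖((χ₂ pu : ℂˣ) : ℂ)‖ < (p : ℝ) ^ s.re) :
    Summable (fun kl : Lam =>
      ‖(((χ₁ (pu ^ kl.val.1) : ℂˣ) : ℂ) * ((χ₂ (pu ^ kl.val.2) : ℂˣ) : ℂ) *
        (p : ℂ) ^ (-(s * ((kl.val.1 + kl.val.2 : ℕ) : ℂ))))‖) ∧
    ∑' kl : Lam, ((χ₁ (pu ^ kl.val.1) : ℂˣ) : ℂ) * ((χ₂ (pu ^ kl.val.2) : ℂˣ) : ℂ) *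
        (p : ℂ) ^ (-(s * ((kl.val.1 + kl.val.2 : ℕ) : ℂ)))
      = (1 + ((χ₁ pu : ℂˣ) : ℂ) * ((χ₂ pu : ℂˣ) : ℂ) * (p : ℂ) ^ (-2 * s)) /
        ((1 - ((χ₁ (pu ^ 2) : ℂˣ) : ℂ) * (p : ℂ) ^ (-2 * s)) *
         (1 - ((χ₂ (pu ^ 2) : ℂˣ) : ℂ) * (p : ℂ) ^ (-2 * s))) := by
  have hp : 0 < p := (Fact.out : p.Prime).pos
  set a := ((χ₁ pu : ℂˣ) : ℂ) * (p : ℂ) ^ (-s)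
  set b := ((χ₂ pu : ℂˣ) : ℂ) * (p : ℂ) ^ (-s)
  have cpow_nat_mul_neg (n : ℕ) : (p : ℂ) ^ (-(s * (n : ℂ))) = ((p : ℂ) ^ (-s)) ^ n := by
    rw [← Complex.cpow_nat_mul, mul_neg, mul_comm]
  have hterm (k l : ℕ) : ((χ₁ (pu ^ k) : ℂˣ) : ℂ) * ((χ₂ (pu ^ l) : ℂˣ) : ℂ) *
      (p : ℂ) ^ (-(s * ((k + l : ℕ) : ℂ))) = a ^ k * b ^ l := by
    rw [map_pow, map_pow, Units.val_pow_eq_pow_val, Units.val_pow_eq_pow_val, cpow_nat_mul_neg,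
      pow_add]
    ring
  have htwo : (p : ℂ) ^ (-2 * s) = ((p : ℂ) ^ (-s)) ^ 2 := by
    rw [← cpow_nat_mul_neg, Nat.cast_two, neg_mul, mul_comm]
  have ha := norm_mul_natCast_cpow_neg_lt_one hp hs₁
  have hb := norm_mul_natCast_cpow_neg_lt_one hp hs₂
  simp only [hterm]
  refine ⟨(summable_norm_pow_mul_pow_s1 ha hb).subtype Lam, ?_⟩
  rw [tsum_lam_pow_mul_pow ha hb, htwo, map_pow, map_pow, Units.val_pow_eq_pow_val,
    Units.val_pow_eq_pow_val]
  ring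

/-- Let p be a prime, χ₁, χ₂ unramified characters of ℚ_p^× (i.e. group homomorphisms
ℚ_p^× → ℂ^× trivial on ℤ_p^×, the units of norm 1), and s ∈ ℂ with |χ₁(p)| < p^(Re s)
and |χ₂(p)| < p^(Re s).  Then ((k,l) ↦ χ₁(p^k)·χ₂(p^l)·p^(−s(k+l))) indexed by Λ is
absolutely summable and its sum equals
(1 + χ₁(p)χ₂(p)p^(−2s)) / ((1 − χ₁(p²)p^(−2s))(1 − χ₂(p²)p^(−2s))). -/
theorem unramified_character_hecke_series (p : ℕ) [Fact p.Prime]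
    (χ₁ χ₂ : ℚ_[p]ˣ →* ℂˣ)
    (h₁ : ∀ u : ℚ_[p]ˣ, ‖(u : ℚ_[p])‖ = 1 → χ₁ u = 1)
    (h₂ : ∀ u : ℚ_[p]ˣ, ‖(u : ℚ_[p])‖ = 1 → χ₂ u = 1)
    (pu : ℚ_[p]ˣ) (hpu : (pu : ℚ_[p]) = (p : ℚ_[p]))
    (s : ℂ)
    (hs₁ : ‖((χ₁ pu : ℂˣ) : ℂ)‖ < (p : ℝ) ^ s.re)
    (hs₂ : ‖((χ₂ pu : ℂˣ) : ℂ)‖ < (p : ℝ) ^ s.re) :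
    Summable (fun kl : Lam =>
      ‖(((χ₁ (pu ^ kl.val.1) : ℂˣ) : ℂ) * ((χ₂ (pu ^ kl.val.2) : ℂˣ) : ℂ) *
        (p : ℂ) ^ (-(s * ((kl.val.1 + kl.val.2 : ℕ) : ℂ))))‖) ∧
    ∑' kl : Lam, ((χ₁ (pu ^ kl.val.1) : ℂˣ) : ℂ) * ((χ₂ (pu ^ kl.val.2) : ℂˣ) : ℂ) *
        (p : ℂ) ^ (-(s * ((kl.val.1 + kl.val.2 : ℕ) : ℂ)))
      = (1 + ((χ₁ pu : ℂˣ) : ℂ) * ((χ₂ pu : ℂˣ) : ℂ) * (p : ℂ) ^ (-2 * s)) /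
        ((1 - ((χ₁ (pu ^ 2) : ℂˣ) : ℂ) * (p : ℂ) ^ (-2 * s)) *
         (1 - ((χ₂ (pu ^ 2) : ℂˣ) : ℂ) * (p : ℂ) ^ (-2 * s))) :=
  unramified_character_hecke_series_general p χ₁ χ₂ pu s hs₁ hs₂
end
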